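/- arXiv:1307.0174 — 2 statements merged into one kernel-verified Lean document; each statement's English description precedes it below -/
import Mathlib

section
/- If {w_n} is a sequence in the open unit disk satisfying (1 - |w_n|)/(1 - |w_{n-1}|) ≤ c for all n, where 0 < c < 1, then for every k, ∏_{j ≠ k} d(w_k, w_j) ≥ (∏_{j=1}^∞ (1 - c^j)/(1 + c^j))². -/
/-!
The ratio condition gives `1 - ‖w (n + m)‖ ≤ c ^ m * (1 - ‖w n‖)`. For moduli `b ≤ a < 1` the
pseudohyperbolic distance is at least `(a - b) / (1 - a b)`, and under the previous inequality
this is at least `(1 - c ^ m) / (1 + c ^ m)`. So the factors `d(w k, w j)` with `j > k` dominate the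
factors `(1 - c ^ i) / (1 + c ^ i)` one by one, those with `j < k` dominate a subfamily of them, and
since all factors lie in `[0, 1]` each half of `∏_{j ≠ k} d(w k, w j)` is at least the full product.
-/

open Metric

/-- The pseudohyperbolic distance on the unit disk. -/
noncomputable def pd (z w : ℂ) : ℝ := ‖(z - w) / (1 - (starRingEnd ℂ) w * z)‖

open ComplexConjugate

lemma norm_one_sub_conj_mul_sq_sub_norm_sub_sq (z w : ℂ) :
    ‖1 - conj w * z‖ ^ 2 - ‖z - w‖ ^ 2 = (1 - ‖z‖ ^ 2) * (1 - ‖w‖ ^ 2) := by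
  simp only [Complex.sq_norm, Complex.normSq_apply, Complex.sub_re, Complex.sub_im,
    Complex.one_re, Complex.one_im, Complex.mul_re, Complex.mul_im,
    Complex.conj_re, Complex.conj_im]
  ring

lemma one_sub_norm_mul_norm_le_norm_one_sub_conj_mul (z w : ℂ) :
    1 - ‖z‖ * ‖w‖ ≤ ‖1 - conj w * z‖ := by
  simpa [mul_comm] using norm_sub_norm_le (1 : ℂ) (conj w * z)

lemma pd_comm (z w : ℂ) : pd z w = pd w z := by
  rw [pd, pd, norm_div, norm_div, norm_sub_rev, ← Complex.norm_conj (1 - conj z * w)]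
  simp [mul_comm]

lemma pd_nonneg (z w : ℂ) : 0 ≤ pd z w := norm_nonneg _

lemma pd_le_one {z w : ℂ} (hz : ‖z‖ ≤ 1) (hw : ‖w‖ ≤ 1) : pd z w ≤ 1 := by
  have hnum : ‖z - w‖ ≤ ‖1 - conj w * z‖ := by
    refine le_of_sq_le_sq ?_ (norm_nonneg _)
    have hid := norm_one_sub_conj_mul_sq_sub_norm_sub_sq z w
    have hP : 0 ≤ (1 - ‖z‖ ^ 2) * (1 - ‖w‖ ^ 2) := by
      apply mul_nonneg <;> nlinarith [norm_nonneg z, norm_nonneg w]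
    linarith
  rw [pd, norm_div]
  exact div_le_one_of_le₀ hnum (norm_nonneg _)

/-- With `a = ‖z‖`, `b = ‖w‖`, `N = ‖z - w‖`, `D = ‖1 - w̄ z‖` and `P = (1 - a²)(1 - b²)`, both
`D² - N²` and `(1 - ab)² - (a - b)²` equal `P`; this gives the identity `key`, whose right side is
nonnegative because `1 - ab ≤ D`. -/
lemma sub_div_one_sub_mul_le_pd {z w : ℂ} (hz : ‖z‖ < 1) (hw : ‖w‖ < 1) :
    (‖z‖ - ‖w‖) / (1 - ‖z‖ * ‖w‖) ≤ pd z w := by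
  have hid := norm_one_sub_conj_mul_sq_sub_norm_sub_sq z w
  have hD := one_sub_norm_mul_norm_le_norm_one_sub_conj_mul z w
  set a := ‖z‖
  set b := ‖w‖
  set D := ‖1 - conj w * z‖
  set N := ‖z - w‖
  have hab : a * b < 1 := by nlinarith [norm_nonneg z, norm_nonneg w]
  have hP : 0 ≤ (1 - a ^ 2) * (1 - b ^ 2) := by
    apply mul_nonneg <;> nlinarith [norm_nonneg z, norm_nonneg w]
  have hD2 : (1 - a * b) ^ 2 ≤ D ^ 2 := pow_le_pow_left₀ (by linarith) hD 2
  have key : (N * (1 - a * b)) ^ 2 - ((a - b) * D) ^ 2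
      = (1 - a ^ 2) * (1 - b ^ 2) * (D ^ 2 - (1 - a * b) ^ 2) := by
    linear_combination (-(1 - a * b) ^ 2) * hid
  rw [pd, norm_div, div_le_div_iff₀ (by linarith) (by linarith)]
  refine le_of_sq_le_sq ?_ (mul_nonneg (norm_nonneg _) (by linarith))
  linarith [mul_nonneg hP (sub_nonneg.mpr hD2)]

lemma one_sub_div_one_add_le_sub_div_one_sub_mul {a b t : ℝ} (ha : a < 1) (hb0 : 0 ≤ b)
    (hb : b < 1) (ht0 : 0 ≤ t) (ht1 : t ≤ 1) (h : 1 - a ≤ t * (1 - b)) :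
    (1 - t) / (1 + t) ≤ (a - b) / (1 - a * b) := by
  have hab : a * b < 1 := by nlinarith
  rw [div_le_div_iff₀ (by linarith) (by linarith)]
  nlinarith [mul_nonneg (mul_nonneg ht0 (sub_nonneg.mpr ht1)) (sq_nonneg (1 - b)),
    mul_le_mul_of_nonneg_right h (by linarith : 0 ≤ 1 + b + t * (1 - b))]

lemma one_sub_div_one_add_le_pd {z w : ℂ} {t : ℝ} (hz : ‖z‖ < 1) (hw : ‖w‖ < 1)
    (ht0 : 0 ≤ t) (ht1 : t ≤ 1) (h : 1 - ‖z‖ ≤ t * (1 - ‖w‖)) :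
    (1 - t) / (1 + t) ≤ pd z w :=
  (one_sub_div_one_add_le_sub_div_one_sub_mul hz (norm_nonneg w) hw ht0 ht1 h).trans
    (sub_div_one_sub_mul_le_pd hz hw)

lemma one_sub_pow_div_one_add_pow_le_pd {w : ℕ → ℂ} {c : ℝ} (hw : ∀ n, ‖w n‖ < 1)
    (hc0 : 0 ≤ c) (hc1 : c ≤ 1) (hstep : ∀ n, 1 - ‖w (n + 1)‖ ≤ c * (1 - ‖w n‖)) (n i : ℕ) :
    (1 - c ^ (i + 1)) / (1 + c ^ (i + 1)) ≤ pd (w n) (w (n + i + 1)) := by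
  have hgeom : 1 - ‖w (n + (i + 1))‖ ≤ c ^ (i + 1) * (1 - ‖w n‖) :=
    le_geom (u := fun m => 1 - ‖w (n + m)‖) hc0 (i + 1) fun m _ => hstep (n + m)
  rw [pd_comm]
  exact one_sub_div_one_add_le_pd (hw _) (hw n) (pow_nonneg hc0 _) (pow_le_one₀ hc0 hc1) hgeom

section ProductsInUnitInterval

variable {ι : Type*} {f : ι → ℝ}

lemma hasProd_iInf_prod_of_le_one (h0 : ∀ i, 0 ≤ f i) (h1 : ∀ i, f i ≤ 1) :
    HasProd f (⨅ s : Finset ι, ∏ i ∈ s, f i) :=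
  tendsto_atTop_ciInf (Finset.prod_anti_set_of_le_one h0 h1)
    ⟨0, by rintro _ ⟨s, rfl⟩; exact Finset.prod_nonneg fun i _ => h0 i⟩

lemma tprod_le_prod_of_le_one (h0 : ∀ i, 0 ≤ f i) (h1 : ∀ i, f i ≤ 1) (s : Finset ι) :
    ∏' i, f i ≤ ∏ i ∈ s, f i :=
  (Finset.prod_anti_set_of_le_one h0 h1).le_of_tendsto
    (hasProd_iInf_prod_of_le_one h0 h1).multipliable.hasProd s

lemma le_tprod_of_le_one (h0 : ∀ i, 0 ≤ f i) (h1 : ∀ i, f i ≤ 1) {a : ℝ}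
    (h : ∀ s : Finset ι, a ≤ ∏ i ∈ s, f i) : a ≤ ∏' i, f i :=
  le_hasProd_of_le_prod (hasProd_iInf_prod_of_le_one h0 h1).multipliable.hasProd h

lemma tprod_le_prod_of_injOn {κ : Type*} [DecidableEq ι] (h0 : ∀ i, 0 ≤ f i) (h1 : ∀ i, f i ≤ 1)
    {g : κ → ℝ} {s : Finset κ} (e : κ → ι) (he : Set.InjOn e s) (hfg : ∀ j ∈ s, f (e j) ≤ g j) :
    ∏' i, f i ≤ ∏ j ∈ s, g j :=
  calc ∏' i, f i ≤ ∏ i ∈ s.image e, f i := tprod_le_prod_of_le_one h0 h1 _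
    _ = ∏ j ∈ s, f (e j) := Finset.prod_image he
    _ ≤ ∏ j ∈ s, g j := Finset.prod_le_prod (fun _ _ => h0 _) hfg

end ProductsInUnitInterval

lemma sq_tprod_le_tprod {f g : ℕ → ℝ} (k : ℕ) (hf0 : ∀ i, 0 ≤ f i) (hf1 : ∀ i, f i ≤ 1)
    (hg0 : ∀ j, 0 ≤ g j) (hg1 : ∀ j, g j ≤ 1) (hgk : g k = 1)
    (hbelow : ∀ i j, j + i + 1 = k → f i ≤ g j) (habove : ∀ i, f i ≤ g (k + i + 1)) :
    (∏' i, f i) ^ 2 ≤ ∏' j, g j := by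
  refine le_tprod_of_le_one hg0 hg1 fun s => ?_
  rw [← Finset.prod_erase s hgk, ← Finset.prod_filter_mul_prod_filter_not (s.erase k) (· < k), sq]
  refine mul_le_mul ?_ ?_ (tprod_nonneg hf0) (Finset.prod_nonneg fun j _ => hg0 j)
  · refine tprod_le_prod_of_injOn hf0 hf1 (fun j => k - j - 1) ?_ fun j hj => hbelow _ _ ?_
    · intro x hx y hy hxy
      simp only [Finset.coe_filter, Set.mem_ofPred_eq] at hx hy hxy
      omega
    · simp only [Finset.mem_filter] at hj
      omega
  · refine tprod_le_prod_of_injOn hf0 hf1 (fun j => j - k - 1) ?_ fun j hj => ?_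
    · intro x hx y hy hxy
      simp only [Finset.coe_filter, Finset.mem_erase, Set.mem_ofPred_eq] at hx hy hxy
      omega
    · simp only [Finset.mem_filter, Finset.mem_erase] at hj
      convert habove (j - k - 1) using 2
      omega

theorem separation_lower_bound_of_ratio_le
    (w : ℕ → ℂ) (hw : ∀ n, w n ∈ ball (0:ℂ) 1)
    (c : ℝ) (hc0 : 0 < c) (hc1 : c < 1)
    (hrat : ∀ n, (1 - ‖w (n+1)‖) / (1 - ‖w n‖) ≤ c) :
    ∀ k, (∏' j : ℕ, (1 - c^(j+1)) / (1 + c^(j+1)))^2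
      ≤ ∏' j : ℕ, if j = k then 1 else pd (w k) (w j) := by
  intro k
  have hw' : ∀ n, ‖w n‖ < 1 := fun n => mem_ball_zero_iff.mp (hw n)
  have hstep : ∀ n, 1 - ‖w (n + 1)‖ ≤ c * (1 - ‖w n‖) := fun n =>
    (div_le_iff₀ (sub_pos.mpr (hw' n))).mp (hrat n)
  have hfactor := one_sub_pow_div_one_add_pow_le_pd hw' hc0.le hc1.le hstep
  have hpow : ∀ i : ℕ, c ^ (i + 1) ≤ 1 := fun i => pow_le_one₀ hc0.le hc1.le
  refine sq_tprod_le_tprod k (fun i => ?_) (fun i => ?_) (fun j => ?_) (fun j => ?_) (if_pos rfl)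
    (fun i j hij => ?_) (fun i => ?_)
  · exact div_nonneg (sub_nonneg.mpr (hpow i)) (by positivity)
  · exact div_le_one_of_le₀ (by linarith [pow_nonneg hc0.le (i + 1)]) (by positivity)
  · split_ifs
    exacts [zero_le_one, pd_nonneg _ _]
  · split_ifs
    exacts [le_rfl, pd_le_one (hw' k).le (hw' j).le]
  · subst hij
    rw [if_neg (by omega), pd_comm]
    exact hfactor j i
  · rw [if_neg (by omega)]
    exact hfactor k i
end

section
/- Let ρ(z) = ξz where ξ is a primitive n-th root of unity, and let B be a Blaschke product with simple zeros satisfying B∘ρ = B. Then the zero set of B is invariant under multiplication by ξ, and there is a Blaschke product B₁ and a unimodular constant c such that B(z) = c·B₁(z^n) for all z ∈ D. -/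
open Metric Filter Topology

/-- A normalized Blaschke factor with zero `a`. -/
noncomputable def blaschkeFactor (a w : ℂ) : ℂ :=
  ((‖a‖ : ℂ) / a) * ((a - w) / (1 - (starRingEnd ℂ) a * w))

/-!
Since `B(ξ z_k) = B(z_k) = 0` and a convergent Blaschke product vanishes only at its zeros, the
zero set is invariant under `ξ`, so the group of `n`-th roots of unity acts on it, freely because
`0` is not a zero. Writing `b_a(u) = ‖a‖ (1 - u / a) / (1 - conj a * u)` and using
`conj ζ = ζ⁻¹` and `∏_ζ (1 - ζ t) = 1 - t ^ n`, the factors over one orbit multiply to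
`b_{a ^ n}(u ^ n)`. Regrouping the absolutely convergent product by orbits, with one representative
`a_j` per orbit, gives `B(u) = ∏_j b_{a_j ^ n}(u ^ n)`; Bernoulli's inequality
`1 - ‖a‖ ^ n ≤ n (1 - ‖a‖)` preserves the Blaschke condition.
-/

open ComplexConjugate

lemma blaschkeFactor_self (a : ℂ) : blaschkeFactor a a = 0 := by
  simp [blaschkeFactor]

lemma blaschkeFactor_eq_norm_mul_div (a u : ℂ) :
    blaschkeFactor a u = ‖a‖ * (1 - u / a) / (1 - conj a * u) := by
  rcases eq_or_ne a 0 with rfl | ha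
  · simp [blaschkeFactor]
  · rw [blaschkeFactor, one_sub_div ha]
    ring

lemma one_sub_norm_le_norm_one_sub_conj_mul {a u : ℂ} (ha : ‖a‖ ≤ 1) :
    1 - ‖u‖ ≤ ‖1 - conj a * u‖ := by
  calc 1 - ‖u‖ ≤ 1 - ‖conj a * u‖ := by
        rw [norm_mul, Complex.norm_conj]
        gcongr
        exact mul_le_of_le_one_left (norm_nonneg u) ha
    _ ≤ ‖1 - conj a * u‖ := by simpa using norm_sub_norm_le (1 : ℂ) (conj a * u)

lemma one_sub_conj_mul_ne_zero {a u : ℂ} (ha : ‖a‖ ≤ 1) (hu : ‖u‖ < 1) :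
    1 - conj a * u ≠ 0 :=
  norm_pos_iff.1 <| (sub_pos.2 hu).trans_le (one_sub_norm_le_norm_one_sub_conj_mul ha)

lemma blaschkeFactor_ne_zero {a u : ℂ} (ha0 : a ≠ 0) (ha : ‖a‖ ≤ 1) (hu : ‖u‖ < 1)
    (hua : u ≠ a) : blaschkeFactor a u ≠ 0 :=
  mul_ne_zero (div_ne_zero (by simpa using ha0) ha0)
    (div_ne_zero (sub_ne_zero.2 hua.symm) (one_sub_conj_mul_ne_zero ha hu))

lemma blaschkeFactor_sub_one_mul {a u : ℂ} (ha0 : a ≠ 0) (hden : 1 - conj a * u ≠ 0) :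
    (blaschkeFactor a u - 1) * (a * (1 - conj a * u)) = -((1 - ‖a‖) * (a + ‖a‖ * u)) := by
  have hconj : conj a * a = (‖a‖ : ℂ) ^ 2 := by
    rw [Complex.conj_mul']
  have hmul : blaschkeFactor a u * (a * (1 - conj a * u)) = ‖a‖ * (a - u) := by
    rw [blaschkeFactor, div_mul_div_comm, div_mul_eq_mul_div, div_eq_iff (mul_ne_zero ha0 hden)]
  linear_combination hmul + u * hconj

lemma norm_blaschkeFactor_sub_one_le {a u : ℂ} (ha : ‖a‖ ≤ 1) (hu : ‖u‖ < 1) :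
    ‖blaschkeFactor a u - 1‖ ≤ (1 + ‖u‖) / (1 - ‖u‖) * (1 - ‖a‖) := by
  have hu' : 0 < 1 - ‖u‖ := sub_pos.2 hu
  rw [div_mul_eq_mul_div, le_div_iff₀ hu']
  rcases eq_or_ne a 0 with rfl | ha0
  · simp only [blaschkeFactor, norm_zero, Complex.ofReal_zero, zero_div, zero_mul, zero_sub,
      norm_neg, norm_one, sub_zero, one_mul, mul_one]
    linarith [norm_nonneg u]
  have key := congrArg norm (blaschkeFactor_sub_one_mul ha0 (one_sub_conj_mul_ne_zero ha hu))
  have h1a : ‖(1 : ℂ) - ‖a‖‖ = 1 - ‖a‖ := by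
    rw [← Complex.ofReal_one, ← Complex.ofReal_sub, Complex.norm_real,
      Real.norm_of_nonneg (sub_nonneg.2 ha)]
  rw [norm_mul, norm_mul, norm_neg, norm_mul, h1a] at key
  have hnum : ‖a + ‖a‖ * u‖ ≤ ‖a‖ * (1 + ‖u‖) := by
    calc ‖a + ‖a‖ * u‖ ≤ ‖a‖ + ‖a‖ * ‖u‖ := by
          simpa [norm_mul] using norm_add_le a (‖a‖ * u)
      _ = ‖a‖ * (1 + ‖u‖) := by ring
  refine le_of_mul_le_mul_right ?_ (norm_pos_iff.2 ha0)
  calc ‖blaschkeFactor a u - 1‖ * (1 - ‖u‖) * ‖a‖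
      ≤ ‖blaschkeFactor a u - 1‖ * (‖a‖ * ‖1 - conj a * u‖) := by
        rw [mul_assoc, mul_comm (1 - ‖u‖)]
        gcongr
        exact one_sub_norm_le_norm_one_sub_conj_mul ha
    _ = (1 - ‖a‖) * ‖a + ‖a‖ * u‖ := key
    _ ≤ (1 - ‖a‖) * (‖a‖ * (1 + ‖u‖)) := by gcongr
    _ = (1 + ‖u‖) * (1 - ‖a‖) * ‖a‖ := by ring

section BlaschkeProduct

variable {ι : Type*} {z : ι → ℂ}

lemma summable_norm_blaschkeFactor_sub_one (hz : ∀ k, ‖z k‖ ≤ 1)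
    (hsum : Summable fun k => 1 - ‖z k‖) {u : ℂ} (hu : ‖u‖ < 1) :
    Summable fun k => ‖blaschkeFactor (z k) u - 1‖ :=
  (hsum.mul_left _).of_nonneg_of_le (fun _ => norm_nonneg _)
    fun k => norm_blaschkeFactor_sub_one_le (hz k) hu

lemma multipliable_blaschkeFactor (hz : ∀ k, ‖z k‖ ≤ 1)
    (hsum : Summable fun k => 1 - ‖z k‖) {u : ℂ} (hu : ‖u‖ < 1) :
    Multipliable fun k => blaschkeFactor (z k) u := by
  simpa using multipliable_one_add_of_summable (summable_norm_blaschkeFactor_sub_one hz hsum hu)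

lemma tprod_blaschkeFactor_eq_zero_iff (hz0 : ∀ k, z k ≠ 0) (hz : ∀ k, ‖z k‖ ≤ 1)
    (hsum : Summable fun k => 1 - ‖z k‖) {u : ℂ} (hu : ‖u‖ < 1) :
    ∏' k, blaschkeFactor (z k) u = 0 ↔ ∃ k, z k = u := by
  refine ⟨fun h => ?_, fun ⟨k, hk⟩ => tprod_of_exists_eq_zero ⟨k, hk ▸ blaschkeFactor_self _⟩⟩
  by_contra! hne
  refine tprod_one_add_ne_zero_of_summable (f := fun k => blaschkeFactor (z k) u - 1)
    (fun k => ?_) (summable_norm_blaschkeFactor_sub_one hz hsum hu) (by simpa using h)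
  simpa using blaschkeFactor_ne_zero (hz0 k) (hz k) hu (hne k).symm

end BlaschkeProduct

section RootsOfUnity

variable {R : Type*} [CommRing R] [IsDomain R] {n : ℕ}

lemma stabilizer_rootsOfUnity_eq_bot {x : R} (hx : x ≠ 0) :
    MulAction.stabilizer (rootsOfUnity n R) x = ⊥ := by
  refine (Subgroup.eq_bot_iff_forall _).2 fun g hg => Subtype.ext (Units.ext ?_)
  have hgx : ((g : Rˣ) : R) * x = 1 * x := by
    rw [one_mul]
    exact MulAction.mem_stabilizer_iff.1 hg
  exact mul_right_cancel₀ hx hgx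

variable [NeZero n] {ξ : R}

lemma IsPrimitiveRoot.prod_rootsOfUnity_one_sub_mul [Fintype (rootsOfUnity n R)]
    (hξ : IsPrimitiveRoot ξ n) (t : R) :
    ∏ g : rootsOfUnity n R, (1 - ((g : Rˣ) : R) * t) = 1 - t ^ n := by
  have h := hξ.pow_sub_pow_eq_prod_sub_mul 1 t (NeZero.pos n)
  rw [one_pow] at h
  rw [h]
  refine Finset.prod_bij (fun g _ => ((g : Rˣ) : R)) (fun g _ => ?_)
    (fun g _ h _ hgh => Subtype.ext (Units.ext hgh)) (fun x hx => ?_) (fun _ _ => rfl)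
  · exact (Polynomial.mem_nthRootsFinset (NeZero.pos n) 1).2 ((mem_rootsOfUnity' n _).1 g.2)
  · have hx' := (Polynomial.mem_nthRootsFinset (NeZero.pos n) 1).1 hx
    exact ⟨rootsOfUnity.mkOfPowEq x hx', Finset.mem_univ _, rootsOfUnity.coe_mkOfPowEq hx'⟩

def IsPrimitiveRoot.subMulAction (hξ : IsPrimitiveRoot ξ n) (S : Set R)
    (hS : ∀ x ∈ S, ξ * x ∈ S) : SubMulAction (rootsOfUnity n R) R where
  carrier := S
  smul_mem' g x hx := by
    obtain ⟨i, -, hi⟩ := hξ.eq_pow_of_pow_eq_one ((mem_rootsOfUnity' n _).1 g.2)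
    change ((g : Rˣ) : R) * x ∈ S
    rw [← hi]
    clear hi
    induction i with
    | zero => simpa using hx
    | succ i ih => simpa [pow_succ', mul_assoc] using hS _ ih

end RootsOfUnity

lemma blaschkeFactor_inv_smul {n : ℕ} [NeZero n] (g : rootsOfUnity n ℂ) (a u : ℂ) :
    blaschkeFactor (g⁻¹ • a) u =
      ‖a‖ * (1 - ((g : ℂˣ) : ℂ) * (u / a)) / (1 - ((g : ℂˣ) : ℂ) * (conj a * u)) := by
  have hg : ‖((g : ℂˣ) : ℂ)‖ = 1 := Complex.norm_eq_one_of_mem_rootsOfUnity g.2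
  have hconj : conj ((g⁻¹ : ℂˣ) : ℂ) = ((g : ℂˣ) : ℂ) := by
    rw [Units.val_inv_eq_inv_val, map_inv₀, ← Complex.inv_eq_conj hg, inv_inv]
  change blaschkeFactor (((g⁻¹ : ℂˣ) : ℂ) * a) u = _
  rw [blaschkeFactor_eq_norm_mul_div, map_mul, hconj, norm_mul, Units.val_inv_eq_inv_val,
    norm_inv, hg, inv_one, one_mul, div_mul_eq_div_div, div_inv_eq_mul]
  ring

lemma IsPrimitiveRoot.prod_blaschkeFactor_smul {n : ℕ} [NeZero n] [Fintype (rootsOfUnity n ℂ)]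
    {ξ : ℂ} (hξ : IsPrimitiveRoot ξ n) (a u : ℂ) :
    ∏ g : rootsOfUnity n ℂ, blaschkeFactor (g • a) u = blaschkeFactor (a ^ n) (u ^ n) := by
  rw [← Fintype.prod_equiv (Equiv.inv _) (fun g => blaschkeFactor (g⁻¹ • a) u) _ fun _ => rfl]
  simp only [blaschkeFactor_inv_smul, Finset.prod_div_distrib,
    Finset.prod_mul_distrib, Finset.prod_const, hξ.prod_rootsOfUnity_one_sub_mul]
  rw [blaschkeFactor_eq_norm_mul_div, Finset.card_univ, ← Nat.card_eq_fintype_card,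
    hξ.card_rootsOfUnity]
  simp [div_pow, mul_pow, map_pow]

section Orbits

variable {G X : Type*} [Group G] [MulAction G X]

lemma MulAction.infinite_orbitRel_quotient [Finite G] [Infinite X] :
    Infinite (orbitRel.Quotient G X) := by
  rw [← not_finite_iff_infinite]
  intro hQ
  have hsurj : Function.Surjective fun p : orbitRel.Quotient G X × G => p.2 • p.1.out := by
    intro x
    obtain ⟨g, hg⟩ := orbitRel_apply.1 (Quotient.mk_out (s := orbitRel G X) x)
    exact ⟨(⟦x⟧, g⁻¹), inv_smul_eq_iff.2 hg.symm⟩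
  have : Finite X := Finite.of_surjective _ hsurj
  exact not_finite X

lemma HasProd.prod_orbitRel_quotient {α : Type*} [CommMonoid α] [TopologicalSpace α]
    [ContinuousMul α] [RegularSpace α] [Fintype G]
    (hfree : ∀ x : X, MulAction.stabilizer G x = ⊥) {f : X → α} {a : α} (hf : HasProd f a) :
    HasProd (fun q : MulAction.orbitRel.Quotient G X => ∏ g : G, f (g • q.out)) a :=
  ((MulAction.selfEquivOrbitsQuotientProd hfree).symm.hasProd_iff.2 hf).prod_fiberwise
    fun _ => hasProd_fintype _

end Orbits

lemma Summable.one_sub_norm_pow {ι : Type*} {z : ι → ℂ} (hz : ∀ k, ‖z k‖ ≤ 1)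
    (hsum : Summable fun k => 1 - ‖z k‖) (n : ℕ) : Summable fun k => 1 - ‖z k ^ n‖ := by
  refine (hsum.mul_left (n : ℝ)).of_nonneg_of_le (fun k => ?_) fun k => ?_
  · rw [norm_pow, sub_nonneg]
    exact pow_le_one₀ (norm_nonneg _) (hz k)
  · have bernoulli :=
      one_add_mul_le_pow (show (-2 : ℝ) ≤ ‖z k‖ - 1 by linarith [norm_nonneg (z k)]) n
    rw [add_sub_cancel, ← norm_pow] at bernoulli
    linarith

lemma IsPrimitiveRoot.exists_injective_hasProd_blaschkeFactor_pow {n : ℕ} [NeZero n] {ξ : ℂ}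
    (hξ : IsPrimitiveRoot ξ n) {z : ℕ → ℂ} (hz0 : ∀ k, z k ≠ 0) (hz : Function.Injective z)
    (hrot : ∀ k, ∃ j, z j = ξ * z k) :
    ∃ r : ℕ → ℕ, Function.Injective r ∧ ∀ u a, HasProd (fun k => blaschkeFactor (z k) u) a →
      HasProd (fun j => blaschkeFactor (z (r j) ^ n) (u ^ n)) a := by
  let p := hξ.subMulAction (Set.range z) fun _ ⟨k, hk⟩ => hk ▸ hrot k
  let Q := MulAction.orbitRel.Quotient (rootsOfUnity n ℂ) p
  let eZ : ℕ ≃ p := Equiv.ofInjective z hz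
  have : Fintype (rootsOfUnity n ℂ) := Fintype.ofFinite _
  have : Infinite p := Infinite.of_injective eZ eZ.injective
  have : Countable p := eZ.symm.injective.countable
  have : Countable Q := Quotient.countable
  have : Infinite Q := MulAction.infinite_orbitRel_quotient
  let e : ℕ ≃ Q := (nonempty_denumerable Q).some.eqv.symm
  refine ⟨fun j => eZ.symm (e j).out,
    eZ.symm.injective.comp (Quotient.out_injective.comp e.injective), fun u a hprod => ?_⟩
  have hfree (x : p) : MulAction.stabilizer (rootsOfUnity n ℂ) x = ⊥ := by
    obtain ⟨k, hk⟩ := x.2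
    rw [SubMulAction.stabilizer_of_subMul, ← hk]
    exact stabilizer_rootsOfUnity_eq_bot (hz0 k)
  have horbits :=
    ((eZ.hasProd_iff (f := fun x : p => blaschkeFactor x u)).1 hprod).prod_orbitRel_quotient hfree
  simp only [SubMulAction.val_smul, hξ.prod_blaschkeFactor_smul] at horbits
  have hzeZ (x : p) : z (eZ.symm x) = x := Equiv.apply_ofInjective_symm hz x
  simpa only [hzeZ, Function.comp_def] using e.hasProd_iff.2 horbits

theorem rotation_invariant_blaschke_factors_through_power
    (n : ℕ) (hn : 2 ≤ n) (ξ : ℂ) (hξ : IsPrimitiveRoot ξ n)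
    (z : ℕ → ℂ) (hz : ∀ k, z k ∈ ball (0:ℂ) 1) (hz0 : ∀ k, z k ≠ 0)
    (hsimple : Function.Injective z)
    (hsum : Summable fun k => 1 - ‖z k‖)
    (B : ℂ → ℂ)
    (hB : ∀ w ∈ ball (0:ℂ) 1, B w = ∏' k : ℕ, blaschkeFactor (z k) w)
    (hinv : ∀ w ∈ ball (0:ℂ) 1, B (ξ * w) = B w) :
    (∀ k, ∃ j, z j = ξ * z k) ∧
    ∃ (c : ℂ) (w : ℕ → ℂ) (B₁ : ℂ → ℂ),
      ‖c‖ = 1 ∧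
      (∀ j, w j ∈ ball (0:ℂ) 1) ∧ (∀ j, w j ≠ 0) ∧
      (Summable fun j => 1 - ‖w j‖) ∧
      (∀ u ∈ ball (0:ℂ) 1, B₁ u = ∏' j : ℕ, blaschkeFactor (w j) u) ∧
      (∀ u ∈ ball (0:ℂ) 1, B u = c * B₁ (u ^ n)) := by
  have : NeZero n := ⟨by omega⟩
  have hz1 (k : ℕ) : ‖z k‖ ≤ 1 := (mem_ball_zero_iff.1 (hz k)).le
  have hB0 (u : ℂ) (hu : u ∈ ball (0:ℂ) 1) : B u = 0 ↔ ∃ k, z k = u := by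
    rw [hB u hu]
    exact tprod_blaschkeFactor_eq_zero_iff hz0 hz1 hsum (mem_ball_zero_iff.1 hu)
  have hrot (k : ℕ) : ∃ j, z j = ξ * z k := by
    have hξz : ξ * z k ∈ ball (0:ℂ) 1 := by
      simpa [norm_mul, hξ.norm'_eq_one (NeZero.ne n)] using hz k
    exact (hB0 _ hξz).1 ((hinv _ (hz k)).trans ((hB0 _ (hz k)).2 ⟨k, rfl⟩))
  obtain ⟨r, hr, hprod⟩ := hξ.exists_injective_hasProd_blaschkeFactor_pow hz0 hsimple hrot
  refine ⟨hrot, 1, fun j => z (r j) ^ n, fun u => ∏' j, blaschkeFactor (z (r j) ^ n) u, norm_one,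
    fun j => ?_, fun j => pow_ne_zero n (hz0 _),
    (hsum.comp_injective hr).one_sub_norm_pow (fun j => hz1 _) n, fun _ _ => rfl, fun u hu => ?_⟩
  · rw [mem_ball_zero_iff, norm_pow]
    exact pow_lt_one₀ (norm_nonneg _) (mem_ball_zero_iff.1 (hz _)) (NeZero.ne n)
  · rw [one_mul, hB u hu]
    have hmult := multipliable_blaschkeFactor hz1 hsum (mem_ball_zero_iff.1 hu)
    exact (hprod u _ hmult.hasProd).tprod_eq.symm
end
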